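/- Let G be a graph with edge weights w : E → ℚ taking exactly t values w_1 < w_2 < … < w_t with w_1 > 0, and let ε ∈ (0,1) with w_2 − w_1 ≤ (ε/t)·w_1. Define w' to agree with w except edges of weight w_1 get weight w_2. If M is a matching with w'(M) ≥ (1 − ((t−1)/t)·ε)·OPT', where OPT' is the maximum w'-weight of a matching, then w(M) ≥ (1 − ε)·OPT, where OPT is the maximum w-weight of a matching. -/
import Mathlib


/-- A matching in a graph `G`: a set of edges of `G` that are pairwise vertex-disjoint. -/
def IsGraphMatching {V : Type*} (G : SimpleGraph V) (M : Finset (Sym2 V)) : Prop :=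
  ↑M ⊆ G.edgeSet ∧ ∀ e ∈ M, ∀ f ∈ M, e ≠ f → ∀ v : V, ¬(v ∈ e ∧ v ∈ f)

theorem stmt_7 {V : Type*} [Fintype V] (G : SimpleGraph V) (w w' : Sym2 V → ℚ)
    (t : ℕ) (ht : 2 ≤ t) (vals : Fin t → ℚ) (hmono : StrictMono vals)
    (hpos : 0 < vals ⟨0, by omega⟩)
    (hvals : ∀ e ∈ G.edgeSet, ∃ i : Fin t, w e = vals i)
    (hsurj : ∀ i : Fin t, ∃ e ∈ G.edgeSet, w e = vals i)
    (ε : ℚ) (hε : 0 < ε ∧ ε < 1)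
    (hgap : vals ⟨1, by omega⟩ - vals ⟨0, by omega⟩ ≤ (ε / t) * vals ⟨0, by omega⟩)
    (hw' : ∀ e ∈ G.edgeSet,
      w' e = if w e = vals ⟨0, by omega⟩ then vals ⟨1, by omega⟩ else w e)
    (OPT OPT' : ℚ)
    (hOPT : IsGreatest {x : ℚ | ∃ N : Finset (Sym2 V), IsGraphMatching G N ∧ ∑ e ∈ N, w e = x} OPT)
    (hOPT' : IsGreatest {x : ℚ | ∃ N : Finset (Sym2 V), IsGraphMatching G N ∧ ∑ e ∈ N, w' e = x} OPT')
    (M : Finset (Sym2 V)) (hM : IsGraphMatching G M)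
    (happrox : (∑ e ∈ M, w' e) ≥ (1 - ((t - 1 : ℚ) / t) * ε) * OPT') :
    (∑ e ∈ M, w e) ≥ (1 - ε) * OPT := by
  obtain ⟨hε0, hε1⟩ := hε
  set w1 := vals ⟨0, by omega⟩ with hw1
  set w2 := vals ⟨1, by omega⟩ with hw2
  have h12 : w1 < w2 := hmono (by simp [Fin.lt_def])
  have ht' : (2:ℚ) ≤ (t:ℚ) := by exact_mod_cast ht
  have htpos : (0:ℚ) < (t:ℚ) := by linarith
  -- every edge weight ≥ w1
  have hge : ∀ e ∈ G.edgeSet, w1 ≤ w e := by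
    intro e he
    obtain ⟨i, hi⟩ := hvals e he
    rw [hi]
    exact hmono.monotone (by simp [Fin.le_def])
  -- w ≤ w'
  have hle : ∀ e ∈ G.edgeSet, w e ≤ w' e := by
    intro e he
    rw [hw' e he]
    split
    · next h => rw [h]; exact le_of_lt h12
    · exact le_refl _
  -- w' ≤ w + (w2 - w1)
  have hub : ∀ e ∈ G.edgeSet, w' e ≤ w e + (w2 - w1) := by
    intro e he
    rw [hw' e he]
    split
    · next h => rw [h]; ring_nf; exact le_refl _
    · linarith [hge e he]
  set S := ∑ e ∈ M, w e with hS
  set S' := ∑ e ∈ M, w' e with hS'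
  set c := (M.card : ℚ) with hc
  have hc0 : 0 ≤ c := by positivity
  have h1 : S' ≤ S + c * (w2 - w1) := by
    calc S' ≤ ∑ e ∈ M, (w e + (w2 - w1)) :=
          Finset.sum_le_sum (fun e he => hub e (hM.1 he))
      _ = S + c * (w2 - w1) := by
          rw [Finset.sum_add_distrib, Finset.sum_const, nsmul_eq_mul]
  have h3 : c * w1 ≤ S := by
    calc c * w1 = ∑ _e ∈ M, w1 := by rw [Finset.sum_const, nsmul_eq_mul]
      _ ≤ S := Finset.sum_le_sum (fun e he => hge e (hM.1 he))
  have h4 : S ≤ OPT := hOPT.2 ⟨M, hM, rfl⟩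
  have h5 : OPT ≤ OPT' := by
    obtain ⟨N, hN, hNsum⟩ := hOPT.1
    have : (∑ e ∈ N, w' e) ≤ OPT' := hOPT'.2 ⟨N, hN, rfl⟩
    have h6 : (∑ e ∈ N, w e) ≤ ∑ e ∈ N, w' e :=
      Finset.sum_le_sum (fun e he => hle e (hN.1 he))
    linarith [hNsum ▸ h6]
  have h2 : c * (w2 - w1) ≤ (ε / t) * (c * w1) := by
    calc c * (w2 - w1) ≤ c * ((ε / t) * w1) :=
          mul_le_mul_of_nonneg_left hgap hc0
      _ = (ε / t) * (c * w1) := by ring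
  have hεt : 0 ≤ ε / t := by positivity
  have key : (ε / t) * (c * w1) ≤ (ε / t) * OPT' :=
    mul_le_mul_of_nonneg_left (by linarith) hεt
  have hsplit : (1 - ((t - 1 : ℚ) / t) * ε) * OPT' - (ε / t) * OPT' = (1 - ε) * OPT' := by
    field_simp
    ring
  have : S ≥ (1 - ε) * OPT' := by
    have := happrox
    linarith
  calc S ≥ (1 - ε) * OPT' := this
    _ ≥ (1 - ε) * OPT := mul_le_mul_of_nonneg_left h5 (by linarith)
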